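/- Let d ≥ 1 and λ ≥ 1. For an integer j with |j| ≤ λ/10 let z^j = (j/λ, 0, …, 0) ∈ ℝ^d, let I_j = {y ∈ ℝ^d : |y − z^j| ≤ (100dλ)^{−1}}, and let R_j = {(ξ,s) ∈ ℝ^d × ℝ : |ξ₁ − 2jλ^{−1}s| ≤ λ/10, |ξ_i| ≤ λ/10 for i = 2,…,d, |s| ≤ λ²/100}. For a ∈ ℝ^d and b ∈ ℝ define g_j(y) = χ_{I_j}(y)·e^{i⟨a,y⟩ − ib|y|²}. Then there is a constant c > 0, depending only on d (in particular independent of λ, j, a, b), such that Re[ e^{i⟨ξ−a, z^j⟩ − i(s−b)|z^j|²} · 𝓔g_j(ξ,s) ] ≥ c·λ^{−d} for all (ξ,s) ∈ (a,b) + R_j. -/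

import Mathlib

open MeasureTheory Complex Real
open scoped ENNReal NNReal RealInnerProductSpace SchwartzMap

noncomputable section

abbrev Euc (d : ℕ) : Type := EuclideanSpace ℝ (Fin d)

/-- `e^{it}` as a complex number. -/
def eI (t : ℝ) : ℂ := Complex.exp (Complex.I * (t : ℂ))

/-- Fourier transform with the convention `f̂(ξ) = ∫ f(y) e^{-i⟨y,ξ⟩} dy`. -/
def fourierT (d : ℕ) (f : Euc d → ℂ) (ξ : Euc d) : ℂ :=
  ∫ y : Euc d, f y * eI (-⟪y, ξ⟫)

/-- Schrödinger evolution `Uf(x,t) = e^{itΔ}f(x)`. -/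
def schrodU (d : ℕ) (f : Euc d → ℂ) (x : Euc d) (t : ℝ) : ℂ :=
  (((2 * π) ^ d)⁻¹ : ℝ) • ∫ ξ : Euc d, fourierT d f ξ * eI (-(t * ‖ξ‖ ^ 2) + ⟪x, ξ⟫)

/-- Mixed norm `L^q_x(ℝ^d; L^r_t(I))`. -/
def mixedNorm (d : ℕ) (u : Euc d → ℝ → ℂ) (q r : ℝ≥0∞) (I : Set ℝ) : ℝ≥0∞ :=
  eLpNorm (fun x : Euc d => (eLpNorm (fun t : ℝ => u x t) r (volume.restrict I)).toReal)
    q volume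

/-- Fourier extension (adjoint restriction) operator of the compact paraboloid. -/
def extOp (d : ℕ) (f : Euc d → ℂ) (ξ : Euc d) (s : ℝ) : ℂ :=
  ∫ y in {y : Euc d | ‖y‖ ≤ 1}, f y * eI (s * ‖y‖ ^ 2 - ⟪ξ, y⟫)

/-- `R*(p→q)`: the extension operator is bounded from `L^p(ℝ^d)` to `L^q(ℝ^{d+1})`. -/
def Rstar (d : ℕ) (p q : ℝ≥0∞) : Prop :=
  ∃ C : ℝ≥0, ∀ f : Euc d → ℂ, MemLp f p volume →
    eLpNorm (fun z : Euc d × ℝ => extOp d f z.1 z.2) q volume ≤ C * eLpNorm f p volume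

/-- A radial smooth Littlewood–Paley function, supported in `{1/2 ≤ |ξ| ≤ 2}`, whose
dyadic dilates form a partition of unity off the origin. -/
def IsLP (d : ℕ) (φ : Euc d → ℝ) : Prop :=
  ContDiff ℝ (⊤ : ℕ∞) φ ∧
  Function.support φ ⊆ {ξ : Euc d | 1 / 2 ≤ ‖ξ‖ ∧ ‖ξ‖ ≤ 2} ∧
  (∀ x y : Euc d, ‖x‖ = ‖y‖ → φ x = φ y) ∧
  (∀ ξ : Euc d, ξ ≠ 0 → ∑' k : ℤ, φ ((2 : ℝ) ^ (-k) • ξ) = 1)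

/-- The Littlewood–Paley piece `P_k f` for `k ≥ 1`, given by the multiplier `φ(2^{-k}·)`. -/
def dyadicPiece (d : ℕ) (φ : Euc d → ℝ) (f : Euc d → ℂ) (k : ℕ) (x : Euc d) : ℂ :=
  (((2 * π) ^ d)⁻¹ : ℝ) •
    ∫ ξ : Euc d, (φ ((2 : ℝ) ^ (-(k : ℤ)) • ξ) : ℂ) * fourierT d f ξ * eI (⟪x, ξ⟫)

/-- The pieces of the inhomogeneous Littlewood–Paley decomposition:
`P_k` for `k ≥ 1` and `P_0 = Id - ∑_{k ≥ 1} P_k`. -/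
def besovPiece (d : ℕ) (φ : Euc d → ℝ) (f : Euc d → ℂ) : ℕ → Euc d → ℂ
  | 0 => fun x => f x - ∑' k : ℕ, dyadicPiece d φ f (k + 1) x
  | (k + 1) => fun x => dyadicPiece d φ f (k + 1) x

/-- Besov norm `‖f‖_{B^p_{α,ν}}`. -/
def besovNorm (d : ℕ) (φ : Euc d → ℝ) (p : ℝ≥0∞) (α ν : ℝ) (f : Euc d → ℂ) : ℝ≥0∞ :=
  (∑' k : ℕ, ENNReal.ofReal ((2 : ℝ) ^ ((k : ℝ) * α * ν)) *
      eLpNorm (besovPiece d φ f k) p volume ^ ν) ^ (1 / ν)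

/-- Sobolev norm `‖f‖_{L^p_α} = ‖(Id - Δ)^{α/2} f‖_p`. -/
def sobolevNorm (d : ℕ) (p : ℝ≥0∞) (α : ℝ) (f : Euc d → ℂ) : ℝ≥0∞ :=
  eLpNorm (fun x : Euc d => (((2 * π) ^ d)⁻¹ : ℝ) •
    ∫ ξ : Euc d, (((1 + ‖ξ‖ ^ 2) ^ (α / 2) : ℝ) : ℂ) * fourierT d f ξ * eI (⟪x, ξ⟫)) p volume

/-- The kernel of `e^{itΔ} m(D/λ)`. -/
def freqKernel (d : ℕ) (m : Euc d → ℝ) (lam t : ℝ) (x : Euc d) : ℂ :=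
  (((2 * π) ^ d)⁻¹ : ℝ) • ∫ ξ : Euc d, (m (lam⁻¹ • ξ) : ℂ) * eI (-(t * ‖ξ‖ ^ 2) + ⟪x, ξ⟫)

/-- `e^{itΔ} m(D/λ) f`, defined by convolution with the kernel. -/
def freqEvol (d : ℕ) (m : Euc d → ℝ) (lam : ℝ) (f : Euc d → ℂ) (x : Euc d) (t : ℝ) : ℂ :=
  ∫ y : Euc d, freqKernel d m lam t (x - y) * f y

/-- The mixed norm of `𝓔f((s/λ)ξ, s)` over `ξ ∈ 𝓐(λ) = {3λ ≤ |ξ| ≤ 12λ}`, `s ∈ [λ, 2λ]`. -/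
def extMixed (d : ℕ) (f : Euc d → ℂ) (lam : ℝ) (q r : ℝ≥0∞) : ℝ≥0∞ :=
  eLpNorm (fun ξ : Euc d =>
      (eLpNorm (fun s : ℝ => extOp d f ((s / lam) • ξ) s) r
        (volume.restrict (Set.Icc lam (2 * lam)))).toReal)
    q (volume.restrict {ξ : Euc d | 3 * lam ≤ ‖ξ‖ ∧ ‖ξ‖ ≤ 12 * lam})

/-- The first standard basis vector of `ℝ^d`. -/
def e1 (d : ℕ) (hd : 0 < d) : Euc d := EuclideanSpace.single ⟨0, hd⟩ 1

/-!
After multiplying by the phase of the centre `z = z^j`, the integrand of `𝓔 g_j(ξ, s)` becomes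
`e^{iΘ(y)}` on the ball `B(z, r)`, `r = (100 d λ)⁻¹`, where completing the square gives
`Θ(y) = (s - b)|y - z|² - ⟨w, y - z⟩` with `w = ξ - a - 2(s - b) z`. On `(a, b) + R_j` every
coordinate of `w` is at most `λ/10`, so `|Θ| ≤ λ² r² / 100 + d λ r / 10 ≤ 1` on the ball. Hence
`cos Θ ≥ 1/2` there and the real part is at least half the volume of the ball, `≍ λ^{-d}`.
-/

open Metric

lemma eI_add (a b : ℝ) : eI (a + b) = eI a * eI b := by
  rw [eI, eI, eI, ← Complex.exp_add, Complex.ofReal_add, mul_add]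

lemma re_eI (t : ℝ) : (eI t).re = Real.cos t := by
  rw [eI, mul_comm, Complex.exp_ofReal_mul_I_re]

lemma norm_eI (t : ℝ) : ‖eI t‖ = 1 := by
  rw [eI, mul_comm, Complex.norm_exp_ofReal_mul_I]

@[fun_prop]
lemma continuous_eI : Continuous eI := by
  unfold eI; fun_prop

@[fun_prop]
lemma measurable_eI : Measurable eI :=
  continuous_eI.measurable

lemma half_measureReal_le_re_setIntegral_eI {α : Type*} [MeasurableSpace α] {μ : Measure α}
    {s : Set α} {θ : α → ℝ} (hs : MeasurableSet s) (hμs : μ s ≠ ∞) (hθ : Measurable θ)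
    (hθs : ∀ y ∈ s, |θ y| ≤ 1) :
    μ.real s / 2 ≤ (∫ y in s, eI (θ y) ∂μ).re := by
  have hint : IntegrableOn (fun y => eI (θ y)) s μ :=
    Measure.integrableOn_of_bounded hμs (measurable_eI.comp hθ).aestronglyMeasurable
      (ae_of_all _ fun y => (norm_eI (θ y)).le)
  have hcos : ∀ y ∈ s, 1 / 2 ≤ Real.cos (θ y) := fun y hy => by
    have := Real.one_sub_sq_div_two_le_cos (x := θ y)
    nlinarith [abs_le.mp (hθs y hy)]
  calc μ.real s / 2 = 1 / 2 * μ.real s := by ring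
    _ ≤ ∫ y in s, Real.cos (θ y) ∂μ :=
        setIntegral_ge_of_const_le_real hs hμs hcos
          (by simpa only [IntegrableOn, RCLike.re_to_complex, re_eI] using hint.re)
    _ = (∫ y in s, eI (θ y) ∂μ).re := by simpa [re_eI] using integral_re hint

lemma eI_mul_extOp_ite_eq_setIntegral {d : ℕ} (φ : ℝ) (ψ : Euc d → ℝ) {z : Euc d} {r : ℝ}
    (hr : closedBall z r ⊆ closedBall 0 1) (ξ : Euc d) (s : ℝ) :
    eI φ * extOp d (fun y => if ‖y - z‖ ≤ r then eI (ψ y) else 0) ξ s =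
      ∫ y in closedBall z r, eI (φ + ψ y + (s * ‖y‖ ^ 2 - ⟪ξ, y⟫)) := by
  have hunit : {y : Euc d | ‖y‖ ≤ 1} = closedBall 0 1 := by ext; simp
  have hind : ∀ y : Euc d, (if ‖y - z‖ ≤ r then eI (ψ y) else 0) * eI (s * ‖y‖ ^ 2 - ⟪ξ, y⟫) =
      (closedBall z r).indicator (fun y => eI (ψ y + (s * ‖y‖ ^ 2 - ⟪ξ, y⟫))) y := by
    intro y
    by_cases h : ‖y - z‖ ≤ r
    · rw [if_pos h, Set.indicator_of_mem (by simpa [dist_eq_norm] using h), eI_add]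
    · rw [if_neg h, Set.indicator_of_notMem (by simpa [dist_eq_norm] using h), zero_mul]
  rw [extOp, hunit]
  simp only [hind]
  rw [setIntegral_indicator measurableSet_closedBall, Set.inter_eq_self_of_subset_right hr,
    ← integral_const_mul]
  simp only [add_assoc, eI_add]

lemma phase_eq_sq_norm_sub_inner {E : Type*} [NormedAddCommGroup E] [InnerProductSpace ℝ E]
    (a ξ y z : E) (s b : ℝ) :
    ⟪ξ - a, z⟫ - (s - b) * ‖z‖ ^ 2 + (⟪a, y⟫ - b * ‖y‖ ^ 2) + (s * ‖y‖ ^ 2 - ⟪ξ, y⟫) =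
      (s - b) * ‖y - z‖ ^ 2 - ⟪ξ - a - (2 * (s - b)) • z, y - z⟫ := by
  simp only [inner_sub_left, inner_sub_right, real_inner_smul_left, norm_sub_sq_real,
    real_inner_self_eq_norm_sq, real_inner_comm y z]
  ring

lemma abs_inner_le_card_mul_norm {ι : Type*} [Fintype ι] {w : EuclideanSpace ℝ ι} {M : ℝ}
    (hw : ∀ i, |w i| ≤ M) (u : EuclideanSpace ℝ ι) :
    |⟪w, u⟫| ≤ Fintype.card ι * M * ‖u‖ := by
  calc |⟪w, u⟫| = |∑ i, w i * u i| := by simp [PiLp.inner_apply, mul_comm]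
    _ ≤ ∑ i, |w i * u i| := Finset.abs_sum_le_sum_abs _ _
    _ ≤ ∑ _i : ι, M * ‖u‖ := Finset.sum_le_sum fun i _ => by
        rw [abs_mul, ← Real.norm_eq_abs (u i)]
        exact mul_le_mul (hw i) (PiLp.norm_apply_le u i) (norm_nonneg _)
          ((abs_nonneg _).trans (hw i))
    _ = Fintype.card ι * M * ‖u‖ := by simp [mul_assoc]

lemma abs_sq_norm_sub_inner_le_one {d : ℕ} (hd : 0 < d) {lam t : ℝ} {w u : Euc d}
    (hlam : 0 < lam) (hw : ∀ i, |w i| ≤ lam / 10) (ht : |t| ≤ lam ^ 2 / 100)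
    (hu : ‖u‖ ≤ (100 * d * lam)⁻¹) :
    |t * ‖u‖ ^ 2 - ⟪w, u⟫| ≤ 1 := by
  have hd1 : (1 : ℝ) ≤ d := by exact_mod_cast hd
  have hscale : 100 * d * lam * ‖u‖ ≤ 1 := by
    have hpos : 0 < 100 * d * lam := by positivity
    calc 100 * d * lam * ‖u‖ ≤ 100 * d * lam * (100 * d * lam)⁻¹ := by gcongr
      _ = 1 := mul_inv_cancel₀ hpos.ne'
  have hinner := abs_inner_le_card_mul_norm hw u
  rw [Fintype.card_fin] at hinner
  have hquad : |t * ‖u‖ ^ 2| ≤ lam ^ 2 / 100 * ‖u‖ ^ 2 := by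
    rw [abs_mul, abs_of_nonneg (by positivity : (0 : ℝ) ≤ ‖u‖ ^ 2)]
    gcongr
  have hlamu : lam * ‖u‖ ≤ 1 := by nlinarith [norm_nonneg u]
  calc |t * ‖u‖ ^ 2 - ⟪w, u⟫| ≤ |t * ‖u‖ ^ 2| + |⟪w, u⟫| := abs_sub _ _
    _ ≤ (lam * ‖u‖) ^ 2 / 100 + d * lam * ‖u‖ / 10 := by nlinarith
    _ ≤ 1 := by nlinarith [mul_nonneg hlam.le (norm_nonneg u)]

lemma abs_sub_smul_e1_apply_le {d : ℕ} (hd : 0 < d) {v : Euc d} {k M : ℝ}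
    (h1 : |⟪v, e1 d hd⟫ - k| ≤ M)
    (hi : ∀ i : Fin d, i ≠ ⟨0, hd⟩ → |⟪v, EuclideanSpace.single i (1 : ℝ)⟫| ≤ M) (i : Fin d) :
    |(v - k • e1 d hd) i| ≤ M := by
  by_cases h : i = ⟨0, hd⟩
  · subst h
    simpa [e1, EuclideanSpace.inner_single_right] using h1
  · simpa [e1, EuclideanSpace.inner_single_right, h] using hi i h

lemma closedBall_smul_e1_subset_unitBall {d : ℕ} (hd : 0 < d) {lam : ℝ} {j : ℤ}
    (hlam : 1 ≤ lam) (hj : |(j : ℝ)| ≤ lam / 10) :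
    closedBall (((j : ℝ) / lam) • e1 d hd) (100 * d * lam)⁻¹ ⊆ closedBall 0 1 := by
  have hlam0 : 0 < lam := one_pos.trans_le hlam
  have hd1 : (1 : ℝ) ≤ d := by exact_mod_cast hd
  have hcentre : ‖((j : ℝ) / lam) • e1 d hd‖ ≤ 1 / 10 := by
    rw [norm_smul, e1, PiLp.norm_single, norm_one, mul_one, norm_div, Real.norm_eq_abs,
      Real.norm_eq_abs, abs_of_pos hlam0, div_le_iff₀ hlam0]
    linarith
  have hradius : (100 * d * lam)⁻¹ ≤ (100 : ℝ)⁻¹ := inv_anti₀ (by norm_num) (by nlinarith)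
  refine closedBall_subset_closedBall' ?_
  rw [dist_zero_right]
  linarith

/-- Lemma 3.2: the pointwise lower bound for the extension of the modulated
characteristic functions `g_j` on the translated slabs `(a,b) + R_j`. -/
theorem pointwise_lower_bound (d : ℕ) (hd : 0 < d) :
    ∃ c : ℝ, 0 < c ∧
      ∀ lam : ℝ, 1 ≤ lam → ∀ j : ℤ, |(j : ℝ)| ≤ lam / 10 →
        ∀ a : Euc d, ∀ b : ℝ, ∀ ξ : Euc d, ∀ s : ℝ,
          |⟪ξ - a, e1 d hd⟫ - 2 * (j : ℝ) / lam * (s - b)| ≤ lam / 10 →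
          (∀ i : Fin d, i ≠ (⟨0, hd⟩ : Fin d) →
            |⟪ξ - a, EuclideanSpace.single i (1 : ℝ)⟫| ≤ lam / 10) →
          |s - b| ≤ lam ^ 2 / 100 →
          c * ((lam : ℝ) ^ d)⁻¹ ≤
            (eI (⟪ξ - a, ((j : ℝ) / lam) • e1 d hd⟫ -
                  (s - b) * ‖((j : ℝ) / lam) • e1 d hd‖ ^ 2) *
                extOp d (fun y =>
                  if ‖y - ((j : ℝ) / lam) • e1 d hd‖ ≤ (100 * d * lam)⁻¹ then
                    eI (⟪a, y⟫ - b * ‖y‖ ^ 2) else 0) ξ s).re := by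
  have hvol : 0 < volume.real (closedBall (0 : Euc d) 1) :=
    ENNReal.toReal_pos (measure_closedBall_pos volume 0 one_pos).ne' measure_closedBall_lt_top.ne
  refine ⟨volume.real (closedBall (0 : Euc d) 1) * (100 * (d : ℝ))⁻¹ ^ d / 2, by positivity, ?_⟩
  intro lam hlam j hj a b ξ s h1 hi hsb
  have hlam0 : 0 < lam := one_pos.trans_le hlam
  set z := ((j : ℝ) / lam) • e1 d hd
  set r := (100 * (d : ℝ) * lam)⁻¹
  have hball : closedBall z r ⊆ closedBall 0 1 := closedBall_smul_e1_subset_unitBall hd hlam hj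
  have hshift : (2 * (s - b)) • z = (2 * (j : ℝ) / lam * (s - b)) • e1 d hd := by
    rw [smul_smul]; ring_nf
  rw [eI_mul_extOp_ite_eq_setIntegral _ _ hball]
  refine le_trans (le_of_eq ?_) (half_measureReal_le_re_setIntegral_eI measurableSet_closedBall
    measure_closedBall_lt_top.ne (by fun_prop) fun y hy => ?_)
  · rw [Measure.addHaar_real_closedBall' _ z (by positivity), finrank_euclideanSpace_fin]
    simp only [r, mul_inv, mul_pow, inv_pow]
    ring
  · rw [phase_eq_sq_norm_sub_inner, hshift]
    exact abs_sq_norm_sub_inner_le_one hd hlam0 (abs_sub_smul_e1_apply_le hd h1 hi) hsb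
      (by rwa [mem_closedBall, dist_eq_norm] at hy)
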